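/- arXiv:1709.04899 — 2 statements merged into one kernel-verified Lean document; each statement's English description precedes it below -/
import Mathlib

section
/- Let N be a first-order structure elementarily equivalent to an expansion M of (ℕ,<) in which F is an injective function from ℕ into a set Q, S is a binary relation on Q, and Th(M) records that every element a of Q has an eventual S-truth value along F (i.e., there are t ∈ {0,1} and n such that for all m > n, S(a,F(m))^t holds). Suppose ⟨a_α : α < κ⟩ is a <^N-increasing sequence cofinal in ℕ^N with κ an infinite cardinal, and suppose S has the independence property over the image of F in N. If the reduct N↾{Q,S} is λ-saturated and κ < λ, we reach a contradiction; hence ℕ^N has cofinality ≥ λ whenever N↾{Q,S} is λ-saturated. -/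
/-! If some cofinal set `C ⊆ N` had cardinality `< λ`, choose for every `a` an element
`g a ∈ C` above `a`. The type `{Q(x) ∧ ¬(S(x, F c) ↔ S(x, F (g c))) : c ∈ C}` is finitely
satisfiable: finitely many of its formulas only ask `n ↦ S(x, F n)` to be a proper
2-colouring of the finite forest with edges `c — g c`, and the independence property
realizes any colouring. A realization `x` given by saturation then changes its `S`-value
along `F` cofinally often, contradicting the eventual truth value of `x`. -/

open FirstOrder Cardinal

universe u v w

/-- Realization of a formula in one free variable together with a tuple of
parameters. -/
def RealizesAt (L : FirstOrder.Language.{u, v}) (M : Type w) [L.Structure M] (x : M)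
    (q : Σ n : ℕ, L.Formula (Fin 1 ⊕ Fin n) × (Fin n → M)) : Prop :=
  q.2.1.Realize (Sum.elim (fun _ => x) q.2.2)

/-- `M` is `λ`-saturated for `L`: every finitely satisfiable set of `L`-formulas in
one free variable with parameters from a subset of `M` of cardinality `< λ` is
realized in `M`. -/
def LSaturated (L : FirstOrder.Language.{u, v}) (M : Type w) [L.Structure M]
    (lam : Cardinal.{w}) : Prop :=
  ∀ A : Set M, #A < lam →
    ∀ p : Set (Σ n : ℕ, L.Formula (Fin 1 ⊕ Fin n) × (Fin n → M)),
      (∀ q ∈ p, ∀ i, q.2.2 i ∈ A) →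
      (∀ s : Finset (Σ n : ℕ, L.Formula (Fin 1 ⊕ Fin n) × (Fin n → M)),
        ↑s ⊆ p → ∃ x : M, ∀ q ∈ s, RealizesAt L M x q) →
      ∃ x : M, ∀ q ∈ p, RealizesAt L M x q

/-- The language with one unary relation `Q` and one binary relation `S`. -/
inductive QSRel : ℕ → Type
  | q : QSRel 1
  | s : QSRel 2

/-- The language {Q, S}. -/
def LQS : FirstOrder.Language.{0, 0} :=
  ⟨fun _ => PEmpty, QSRel⟩

/-- The reduct of `N` to the language {Q, S}. -/
def QSStructure (N : Type w) (Q : Set N) (S : N → N → Prop) : LQS.Structure N where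
  funMap := fun f _ => f.elim
  RelMap := fun r x =>
    match r with
    | .q => x 0 ∈ Q
    | .s => S (x 0) (x 1)

abbrev ParamFormula (L : FirstOrder.Language.{u, v}) (M : Type w) : Type _ :=
  Σ n : ℕ, L.Formula (Fin 1 ⊕ Fin n) × (Fin n → M)

theorem LSaturated.exists_forall_realizesAt {L : FirstOrder.Language.{u, v}} {M : Type w}
    [L.Structure M] {lam : Cardinal.{w}} (hsat : LSaturated L M lam) {ι : Type w}
    (f : ι → ParamFormula L M) (hι : ℵ₀ ≤ #ι) (hιlam : #ι < lam)
    (hfin : ∀ s : Finset ι, ∃ x : M, ∀ i ∈ s, RealizesAt L M x (f i)) :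
    ∃ x : M, ∀ i, RealizesAt L M x (f i) := by
  classical
  have hparams : #(⋃ i, Set.range (f i).2.2) ≤ #ι := by
    refine (mk_iUnion_le _).trans ?_
    calc #ι * ⨆ i, #(Set.range (f i).2.2) ≤ #ι * ℵ₀ := by
          gcongr
          exact ciSup_le' fun i => mk_le_aleph0_iff.2 inferInstance
      _ = #ι := mul_aleph0_eq hι
  obtain ⟨x, hx⟩ := hsat _ (hparams.trans_lt hιlam) (Set.range f)
    (by rintro _ ⟨i, rfl⟩ j; exact Set.mem_iUnion.2 ⟨i, j, rfl⟩)
    (by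
      intro s hs
      rw [← Set.image_univ, Finset.subset_set_image_iff] at hs
      obtain ⟨s', -, rfl⟩ := hs
      obtain ⟨x, hx⟩ := hfin s'
      exact ⟨x, by simpa using hx⟩)
  exact ⟨x, fun i => hx _ ⟨i, rfl⟩⟩

theorem exists_bool_ne_of_lt_apply {α : Type*} [LinearOrder α] {g : α → α}
    (hg : ∀ a, a < g a) (s : Finset α) : ∃ col : α → Bool, ∀ a ∈ s, col a ≠ col (g a) := by
  classical
  induction s using Finset.induction_on_min with
  | empty => exact ⟨fun _ => true, by simp⟩
  | insert m s hm ih =>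
    obtain ⟨col, hcol⟩ := ih
    refine ⟨Function.update col m (!col (g m)), ?_⟩
    -- `m` lies below `s`, so it is not `g a` for any `a ∈ s`: recolouring it breaks nothing.
    intro a ha
    rcases Finset.mem_insert.1 ha with rfl | ha
    · simp [(hg a).ne']
    · simpa [(hm a ha).ne', ((hm a ha).trans (hg a)).ne'] using hcol a ha

section QS

variable {N : Type w} {Q : Set N} {S : N → N → Prop}

def alternation : LQS.Formula (Fin 1 ⊕ Fin 2) :=
  Language.Relations.formula₁ (L := LQS) QSRel.q (Language.Term.var (Sum.inl 0)) ⊓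
    ((Language.Relations.formula₂ (L := LQS) QSRel.s (Language.Term.var (Sum.inl 0))
      (Language.Term.var (Sum.inr 0))).iff
    (Language.Relations.formula₂ (L := LQS) QSRel.s (Language.Term.var (Sum.inl 0))
      (Language.Term.var (Sum.inr 1)))).not

theorem realizesAt_alternation {x a b : N} :
    @RealizesAt LQS N (QSStructure N Q S) x ⟨2, alternation, ![a, b]⟩ ↔
      x ∈ Q ∧ ¬(S x a ↔ S x b) := by
  let := QSStructure N Q S
  simp only [RealizesAt, alternation, Language.Formula.realize_inf, Language.Formula.realize_not,
    Language.Formula.realize_iff]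
  rfl

variable {F : N → N}

theorem exists_mem_forall_iff_of_indep
    (hIP : ∀ s t : Finset N, Disjoint s t →
      ∃ x ∈ Q, (∀ n ∈ s, S x (F n)) ∧ ∀ n ∈ t, ¬ S x (F n))
    (T : Finset N) (col : N → Bool) : ∃ x ∈ Q, ∀ n ∈ T, (S x (F n) ↔ col n) := by
  obtain ⟨x, hxQ, hpos, hneg⟩ :=
    hIP (T.filter (col ·)) (T.filter (¬col ·)) (Finset.disjoint_filter_filter_not _ _ _)
  refine ⟨x, hxQ, fun n hn => ?_⟩
  cases h : col n
  · simpa using hneg n (by simp [hn, h])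
  · simpa using hpos n (by simp [hn, h])

theorem exists_alternating_of_indep [LinearOrder N]
    (hIP : ∀ s t : Finset N, Disjoint s t →
      ∃ x ∈ Q, (∀ n ∈ s, S x (F n)) ∧ ∀ n ∈ t, ¬ S x (F n))
    {g : N → N} (hg : ∀ a, a < g a) (s : Finset N) :
    ∃ x ∈ Q, ∀ a ∈ s, ¬(S x (F a) ↔ S x (F (g a))) := by
  obtain ⟨col, hcol⟩ := exists_bool_ne_of_lt_apply hg s
  obtain ⟨x, hxQ, hx⟩ := exists_mem_forall_iff_of_indep hIP (s ∪ s.image g) col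
  refine ⟨x, hxQ, fun a ha => ?_⟩
  rw [hx a (by simp [ha]), hx (g a) (Finset.mem_union_right _ (Finset.mem_image_of_mem g ha))]
  simpa using hcol a ha

end QS

theorem stmt_2_general {N : Type w} [LinearOrder N] [NoMaxOrder N] [Nonempty N]
    (Q : Set N) (S : N → N → Prop) (F : N → N)
    (hev : ∀ a ∈ Q, ∃ (t : Bool) (n : N), ∀ m : N, n < m → (S a (F m) ↔ t = true))
    (hIP : ∀ s t : Finset N, Disjoint s t →
      ∃ x ∈ Q, (∀ n ∈ s, S x (F n)) ∧ ∀ n ∈ t, ¬ S x (F n))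
    (lam : Cardinal.{w})
    (hsat : @LSaturated LQS N (QSStructure N Q S) lam) :
    lam ≤ Order.cof N := by
  rw [Order.le_cof_iff]
  intro C hC
  by_contra! hClam
  have hnext : ∀ a : N, ∃ c ∈ C, a < c :=
    not_bddAbove_iff.1 (not_isCofinal_iff_bddAbove.not.1 (not_not.2 hC))
  choose g hgC hg using hnext
  let := QSStructure N Q S
  obtain ⟨x, hx⟩ := hsat.exists_forall_realizesAt
    (fun c : C => ⟨2, alternation, ![F c, F (g c)]⟩)
    (Order.aleph0_le_cof.trans (Order.cof_le hC)) hClam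
    (fun s => (exists_alternating_of_indep hIP hg (s.map (Function.Embedding.subtype _))).imp
      fun x ⟨hxQ, hx⟩ c hc => realizesAt_alternation.2 ⟨hxQ, hx c (by simpa using hc)⟩)
  obtain ⟨t, n, hn⟩ := hev x (realizesAt_alternation.1 (hx ⟨g x, hgC x⟩)).1
  have hflip := (realizesAt_alternation.1 (hx ⟨g n, hgC n⟩)).2
  exact hflip ((hn _ (hg n)).trans (hn _ ((hg n).trans (hg (g n)))).symm)

theorem stmt_2 {N : Type w} [LinearOrder N] [NoMaxOrder N] [Nonempty N]
    (Q : Set N) (S : N → N → Prop) (F : N → N)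
    (hFinj : Function.Injective F) (hFQ : ∀ n : N, F n ∈ Q)
    (hev : ∀ a ∈ Q, ∃ (t : Bool) (n : N), ∀ m : N, n < m → (S a (F m) ↔ t = true))
    (hIP : ∀ s t : Finset N, Disjoint s t →
      ∃ x ∈ Q, (∀ n ∈ s, S x (F n)) ∧ ∀ n ∈ t, ¬ S x (F n))
    (lam : Cardinal.{w})
    (hsat : @LSaturated LQS N (QSStructure N Q S) lam) :
    lam ≤ Order.cof N :=
  stmt_2_general Q S F hev hIP lam hsat
end

section
/- Suppose that for some regular ultrafilter D on λ and models M_i ⊨ T_i, M_j ⊨ T_j, the ultrapower (M_i)^λ/D is λ⁺-saturated but (M_j)^λ/D is not λ⁺-saturated, and suppose moreover that regular ultrapowers of countable theories are ℵ₁-saturated. Then there is no theory T_* interpreting both T_i and T_j such that for every ℵ₁-saturated model of T_*, λ⁺-saturation of the T_i-interpreted part implies λ⁺-saturation of the T_j-interpreted part. That is, ¬(T_j ⊴*_{λ⁺, ℵ₁} T_i). -/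
/- STATEMENT 12: Suppose D is a regular ultrafilter on λ such that D-ultrapowers of
models of T_i are λ⁺-saturated while D-ultrapowers of models of T_j are not
λ⁺-saturated, and suppose moreover that D-ultrapowers (regular ultrapowers) of
models in countable languages are ℵ₁-saturated.  Then there is no theory T_*
interpreting both T_i and T_j such that in every ℵ₁-saturated model of T_*,
λ⁺-saturation of the T_i-interpreted part implies λ⁺-saturation of the
T_j-interpreted part; that is, ¬(T_j ⊴*_{λ⁺,ℵ₁} T_i). -/

open FirstOrder Cardinal

universe u v w

/-- `κ`-saturation in the convention of the interpretability order. -/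
def SatUpTo (L : FirstOrder.Language.{u, v}) (M : Type w) [L.Structure M]
    (κ : Cardinal.{w}) : Prop :=
  κ = 1 ∨ LSaturated L M κ

/-- An interpretation of a relational language `L₀` in `L_*`. -/
structure Interp (L0 Ls : FirstOrder.Language.{u, v}) : Type (max u v) where
  dom : Ls.Formula (Fin 2)
  rel : ∀ ⦃n : ℕ⦄, L0.Relations n → Ls.Formula (Fin n)

namespace Interp

variable {L0 Ls : FirstOrder.Language.{u, v}}

/-- The domain of the interpreted model. -/
def Dom (ι : Interp L0 Ls) (M : Type w) [Ls.Structure M] : Set M :=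
  {a : M | ι.dom.Realize fun _ => a}

/-- The interpreted `L₀`-structure `M^{[φ̄]}`. -/
def interpStructure [L0.IsRelational] (ι : Interp L0 Ls) (M : Type w)
    [Ls.Structure M] : L0.Structure (ι.Dom M) where
  funMap := fun f _ => isEmptyElim f
  RelMap := fun r x => (ι.rel r).Realize fun i => (x i : M)

/-- `φ̄` is an interpretation of `T₀` in `T_*`. -/
def Interprets [L0.IsRelational] (ι : Interp L0 Ls) (Ts : Ls.Theory)
    (T0 : L0.Theory) : Prop :=
  ∀ (M : Type w) [Ls.Structure M], M ⊨ Ts →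
    @FirstOrder.Language.Theory.Model L0 (ι.Dom M) (ι.interpStructure M) T0

end Interp

/-- `T₀ ⊴*_{λ,κ} T₁`. -/
def InterpOrderAt (κ lam : Cardinal.{w}) {L0 L1 : FirstOrder.Language.{u, v}}
    [L0.IsRelational] [L1.IsRelational] (T0 : L0.Theory) (T1 : L1.Theory) : Prop :=
  ∃ (Ls : FirstOrder.Language.{u, v}) (Ts : Ls.Theory)
    (i0 : Interp L0 Ls) (i1 : Interp L1 Ls),
    Ts.IsComplete ∧
    Ls.card ≤ L0.card + L1.card + ℵ₀ ∧
    Interp.Interprets.{u, v, w} i0 Ts T0 ∧ Interp.Interprets.{u, v, w} i1 Ts T1 ∧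
    ∀ (M : Type w) [Ls.Structure M], M ⊨ Ts → SatUpTo Ls M κ →
      (@LSaturated L1 (i1.Dom M) (i1.interpStructure M) lam →
        @LSaturated L0 (i0.Dom M) (i0.interpStructure M) lam)

namespace StmtAux

open FirstOrder.Language FirstOrder.Language.Structure Filter

/-- Saturation transfers along an `L`-isomorphism. -/
theorem lsaturated_of_equiv {L : FirstOrder.Language.{u, v}} {M N : Type w}
    [L.Structure M] [L.Structure N] (e : M ≃[L] N) {κ : Cardinal.{w}}
    (h : LSaturated L M κ) : LSaturated L N κ := by
  classical
  intro A hA p hp hfin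
  set F : (Σ n : ℕ, L.Formula (Fin 1 ⊕ Fin n) × (Fin n → N)) →
      (Σ n : ℕ, L.Formula (Fin 1 ⊕ Fin n) × (Fin n → M)) :=
    fun q => ⟨q.1, q.2.1, fun i => e.symm (q.2.2 i)⟩ with hF
  have key : ∀ (x : M) (q : Σ n : ℕ, L.Formula (Fin 1 ⊕ Fin n) × (Fin n → N)),
      RealizesAt L N (e x) q ↔ RealizesAt L M x (F q) := by
    intro x q
    unfold RealizesAt
    have hv : (Sum.elim (fun _ : Fin 1 => e x) q.2.2) =
        (e : M → N) ∘ (Sum.elim (fun _ : Fin 1 => x) fun i => e.symm (q.2.2 i)) := by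
      funext z
      cases z with
      | inl => simp
      | inr i => simp
    rw [hv]
    exact StrongHomClass.realize_formula e _
  have hAcard : #((e.symm : N → M) '' A : Set M) < κ := by
    rwa [Cardinal.mk_image_eq e.symm.injective]
  obtain ⟨x, hx⟩ := h ((e.symm : N → M) '' A) hAcard (F '' p)
    (by
      rintro q' ⟨q, hq, rfl⟩ i
      exact ⟨q.2.2 i, hp q hq i, rfl⟩)
    (by
      intro s' hs'
      have hex : ∀ q' ∈ s', ∃ q ∈ p, F q = q' := fun q' hq' => hs' hq'
      set s : Finset (Σ n : ℕ, L.Formula (Fin 1 ⊕ Fin n) × (Fin n → N)) :=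
        s'.attach.image (fun q' => (hex q'.1 q'.2).choose) with hs
      obtain ⟨x, hx⟩ := hfin s (by
        intro q hq
        obtain ⟨q', _, rfl⟩ := Finset.mem_image.1 hq
        exact (hex q'.1 q'.2).choose_spec.1)
      refine ⟨e.symm x, ?_⟩
      intro q' hq'
      obtain ⟨hq0, hFq⟩ := (hex q' hq').choose_spec
      have hmem : (hex q' hq').choose ∈ s :=
        Finset.mem_image.2 ⟨⟨q', hq'⟩, Finset.mem_attach _ _, rfl⟩
      have hx' : RealizesAt L N (e (e.symm x)) ((hex q' hq').choose) := by
        rw [e.apply_symm_apply]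
        exact hx _ hmem
      exact hFq ▸ (key _ _).1 hx')
  exact ⟨e x, fun q hq => (key x q).2 (hx (F q) ⟨q, hq, rfl⟩)⟩

variable {Λ' : Type u} (D : Ultrafilter Λ') {L0 Ls : FirstOrder.Language.{u, u}}
  [L0.IsRelational] (ι : Interp L0 Ls) (M : Type u) [Ls.Structure M] [Nonempty M]

/-- The interpreted part of an ultrapower is isomorphic to the ultrapower of
the interpreted part. -/
noncomputable def interpUltraEquiv :
    letI := ι.interpStructure M
    letI := ι.interpStructure ((D : Filter Λ').Product fun _ => M)
    ((D : Filter Λ').Product fun _ => (ι.Dom M : Type u)) ≃[L0]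
      (ι.Dom ((D : Filter Λ').Product fun _ => M) : Type u) := by
  classical
  letI := ι.interpStructure M
  letI := ι.interpStructure ((D : Filter Λ').Product fun _ => M)
  letI sP : Setoid (∀ _ : Λ', (ι.Dom M : Type u)) :=
    (D : Filter Λ').productSetoid fun _ => (ι.Dom M : Type u)
  have hmem : ∀ g : Λ' → M,
      ((g : (D : Filter Λ').Product fun _ => M) ∈
        ι.Dom ((D : Filter Λ').Product fun _ => M)) ↔
        ∀ᶠ a in (D : Filter Λ'), g a ∈ ι.Dom M := by
    intro g
    exact Ultraproduct.realize_formula_cast (M := fun _ => M) ι.dom (fun _ => g)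
  have hFresp : ∀ h h' : ∀ _ : Λ', (ι.Dom M : Type u), h ≈ h' →
      ((fun a => (h a : M) : Λ' → M) : (D : Filter Λ').Product fun _ => M) =
      ((fun a => (h' a : M) : Λ' → M) : (D : Filter Λ').Product fun _ => M) := by
    intro h h' hhh
    exact Quotient.sound' (hhh.mono fun a ha => congrArg Subtype.val ha)
  let f : ((D : Filter Λ').Product fun _ => (ι.Dom M : Type u)) →
      (ι.Dom ((D : Filter Λ').Product fun _ => M) : Type u) :=
    Quotient.lift
      (fun h : ∀ _ : Λ', (ι.Dom M : Type u) =>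
        (⟨((fun a => (h a : M) : Λ' → M) : (D : Filter Λ').Product fun _ => M),
          (hmem _).2 (Filter.Eventually.of_forall fun a => (h a).2)⟩ :
            (ι.Dom ((D : Filter Λ').Product fun _ => M) : Type u)))
      (fun h h' hhh => Subtype.ext (hFresp h h' hhh))
  have hinj : Function.Injective f := by
    intro x y hxy
    induction x using Quotient.inductionOn' with
    | h hx =>
    induction y using Quotient.inductionOn' with
    | h hy =>
    have : ∀ᶠ a in (D : Filter Λ'), ((hx a : M)) = ((hy a : M)) :=
      Quotient.exact' (congrArg Subtype.val hxy)
    exact Quotient.sound' (this.mono fun a ha => Subtype.ext ha)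
  have hsurj : Function.Surjective f := by
    rintro ⟨x, hx⟩
    induction x using Quotient.inductionOn' with
    | h g =>
    have hg : ∀ᶠ a in (D : Filter Λ'), g a ∈ ι.Dom M := (hmem g).1 hx
    have hne : Nonempty (ι.Dom M : Type u) := by
      obtain ⟨a, ha⟩ := Filter.Eventually.exists hg
      exact ⟨⟨g a, ha⟩⟩
    refine ⟨Quotient.mk'' (fun a =>
      if ha : g a ∈ ι.Dom M then (⟨g a, ha⟩ : ι.Dom M) else Classical.choice hne), ?_⟩
    refine Subtype.ext ?_
    refine Quotient.sound' (hg.mono fun a ha => ?_)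
    simp [ha]
  refine ⟨Equiv.ofBijective f ⟨hinj, hsurj⟩, ?_, ?_⟩
  · intro n F' x
    exact isEmptyElim F'
  · intro n r x
    have hrep : ∀ i, ∃ h, Quotient.mk'' h = x i := fun i => Quotient.exists_rep (x i)
    choose g hg using hrep
    have hx : x = fun i => Quotient.mk'' (g i) := funext fun i => (hg i).symm
    subst hx
    show RelMap r (fun i => f (Quotient.mk'' (g i))) ↔ _
    have hlhs : RelMap r (fun i => f (Quotient.mk'' (g i))) ↔
        ∀ᶠ a in (D : Filter Λ'), (ι.rel r).Realize fun i => ((g i a : M)) := by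
      show (ι.rel r).Realize
          (fun i => ((f (Quotient.mk'' (g i)) : (D : Filter Λ').Product fun _ => M))) ↔ _
      exact Ultraproduct.realize_formula_cast (M := fun _ => M) (ι.rel r)
        (fun i a => (g i a : M))
    rw [hlhs]
    exact (relMap_quotient_mk' (s := sP) r g).symm

end StmtAux

theorem stmt_12 {L0 L1 : FirstOrder.Language.{u, u}}
    [L0.IsRelational] [L1.IsRelational]
    (Tj : L0.Theory) (Ti : L1.Theory)
    (hL0 : L0.card ≤ ℵ₀) (hL1 : L1.card ≤ ℵ₀)
    (lam : Cardinal.{u}) (Λ : Type u) (hΛ : #Λ = lam) (D : Ultrafilter Λ)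
    -- `D` is a regular ultrafilter on `λ`
    (hregular : ∃ X : Λ → Set Λ, (∀ j, X j ∈ D) ∧ ∀ i : Λ, {j | i ∈ X j}.Finite)
    -- regular ultrapowers of models in countable languages are ℵ₁-saturated
    (hreg : ∀ (L : FirstOrder.Language.{u, u}), L.card ≤ ℵ₀ →
      ∀ (M : Type u) [L.Structure M],
        LSaturated L ((D : Filter Λ).Product fun _ => M) (aleph 1))
    -- D-ultrapowers of models of T_i are λ⁺-saturated
    (hsat : ∀ (M : Type u) [L1.Structure M], M ⊨ Ti →
      LSaturated L1 ((D : Filter Λ).Product fun _ => M) (Order.succ lam))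
    -- D-ultrapowers of models of T_j are not λ⁺-saturated
    (hnsat : ∀ (M : Type u) [L0.Structure M], M ⊨ Tj →
      ¬ LSaturated L0 ((D : Filter Λ).Product fun _ => M) (Order.succ lam)) :
    ¬ InterpOrderAt (aleph 1) (Order.succ lam) Tj Ti := by
  rintro ⟨Ls, Ts, i0, i1, hcomp, hcard, hint0, hint1, hmain⟩
  have hLs : Ls.card ≤ ℵ₀ := by
    refine hcard.trans ?_
    calc L0.card + L1.card + ℵ₀ ≤ ℵ₀ + ℵ₀ + ℵ₀ := by
          exact add_le_add (add_le_add hL0 hL1) le_rfl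
      _ = ℵ₀ := by simp
  obtain ⟨M⟩ := hcomp.1
  set N : Type u := (D : Filter Λ).Product fun _ => (M : Type u) with hN
  have hNTs : N ⊨ Ts := by
    refine FirstOrder.Language.Theory.model_iff _ |>.2 fun φ hφ => ?_
    exact (FirstOrder.Language.Ultraproduct.sentence_realize φ).2
      (Filter.Eventually.of_forall fun _ =>
        FirstOrder.Language.Theory.realize_sentence_of_mem Ts hφ)
  have hNsatu : SatUpTo Ls N (aleph 1) := Or.inr (hreg Ls hLs (M : Type u))
  letI S1 : L1.Structure (i1.Dom (M : Type u)) := i1.interpStructure (M : Type u)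
  letI S0 : L0.Structure (i0.Dom (M : Type u)) := i0.interpStructure (M : Type u)
  have hM1 : (i1.Dom (M : Type u) : Type u) ⊨ Ti := hint1 (M : Type u) M.is_model
  have hM0 : (i0.Dom (M : Type u) : Type u) ⊨ Tj := hint0 (M : Type u) M.is_model
  have hsat1 : LSaturated L1 ((D : Filter Λ).Product fun _ => (i1.Dom (M : Type u) : Type u))
      (Order.succ lam) := hsat _ hM1
  letI SN1 : L1.Structure (i1.Dom N) := i1.interpStructure N
  letI SN0 : L0.Structure (i0.Dom N) := i0.interpStructure N
  have hsatN1 : LSaturated L1 (i1.Dom N) (Order.succ lam) :=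
    StmtAux.lsaturated_of_equiv (StmtAux.interpUltraEquiv D i1 (M : Type u)) hsat1
  have hsatN0 : LSaturated L0 (i0.Dom N) (Order.succ lam) :=
    hmain N hNTs hNsatu hsatN1
  have hsat0 : LSaturated L0 ((D : Filter Λ).Product fun _ => (i0.Dom (M : Type u) : Type u))
      (Order.succ lam) :=
    StmtAux.lsaturated_of_equiv (StmtAux.interpUltraEquiv D i0 (M : Type u)).symm hsatN0
  exact hnsat _ hM0 hsat0
end
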